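/- arXiv:2603.14612 — 3 statements merged into one kernel-verified Lean document; each statement's English description precedes it below -/
import Mathlib

section
/- The semi-tensor product is associative: for all real matrices A ∈ M_{m×n}(ℝ), B ∈ M_{p×q}(ℝ), and C ∈ M_{r×s}(ℝ), one has (A ⋉ B) ⋉ C = A ⋉ (B ⋉ C) (the two sides are matrices of the same dimensions, after identifying the index types arising from the iterated lcm computations). -/
open Matrix Kronecker


/-- Kronecker product of real matrices, with `Fin`-indices flattened
lexicographically (entry at row `(i-1)p+k`, column `(j-1)q+l` is `A i j * B k l`). -/
noncomputable def fkron {m n p q : ℕ} (A : Matrix (Fin m) (Fin n) ℝ)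
    (B : Matrix (Fin p) (Fin q) ℝ) : Matrix (Fin (m * p)) (Fin (n * q)) ℝ :=
  Matrix.reindex finProdFinEquiv finProdFinEquiv (Matrix.kroneckerMap (· * ·) A B)

/-- The semi-tensor product `A ⋉ B = (A ⊗ I_{t/n})(B ⊗ I_{t/p})`, `t = lcm(n,p)`. -/
noncomputable def stp {m n p q : ℕ} (A : Matrix (Fin m) (Fin n) ℝ)
    (B : Matrix (Fin p) (Fin q) ℝ) :
    Matrix (Fin (m * (Nat.lcm n p / n))) (Fin (q * (Nat.lcm n p / p))) ℝ :=
  fkron A (1 : Matrix (Fin (Nat.lcm n p / n)) (Fin (Nat.lcm n p / n)) ℝ) *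
    Matrix.reindex
      (finCongr (show p * (Nat.lcm n p / p) = n * (Nat.lcm n p / n) by
        rw [Nat.mul_div_cancel' (Nat.dvd_lcm_right n p),
          Nat.mul_div_cancel' (Nat.dvd_lcm_left n p)]))
      (Equiv.refl _)
      (fkron B (1 : Matrix (Fin (Nat.lcm n p / p)) (Fin (Nat.lcm n p / p)) ℝ))

/-- Cast a matrix along equalities of its `Fin` dimensions. -/
def mcast {a b a' b' : ℕ} (ha : a = a') (hb : b = b')
    (M : Matrix (Fin a) (Fin b) ℝ) : Matrix (Fin a') (Fin b') ℝ :=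
  M.submatrix (Fin.cast ha.symm) (Fin.cast hb.symm)

lemma mcast_rfl {a b : ℕ} (M : Matrix (Fin a) (Fin b) ℝ) : mcast rfl rfl M = M := rfl

lemma mcast_mcast {a b a' b' a'' b'' : ℕ} (ha : a = a') (hb : b = b')
    (ha' : a' = a'') (hb' : b' = b'') (M : Matrix (Fin a) (Fin b) ℝ) :
    mcast ha' hb' (mcast ha hb M) = mcast (ha.trans ha') (hb.trans hb') M := by
  subst ha hb ha' hb'; rfl

lemma mcast_mul {a b c a' b' c' b2 : ℕ} (ha : a = a') (hb : b = b') (hb2 : b2 = b') (hc : c = c')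
    (M : Matrix (Fin a) (Fin b) ℝ) (N : Matrix (Fin b2) (Fin c) ℝ) :
    mcast ha hb M * mcast hb2 hc N = mcast ha hc (M * mcast (hb2.trans hb.symm) rfl N) := by
  subst ha hb hc hb2; rfl

lemma mul_mcast_assoc {u v a b c d d' : ℕ} (X : Matrix (Fin u) (Fin v) ℝ)
    (Y : Matrix (Fin a) (Fin b) ℝ) (Z : Matrix (Fin c) (Fin d) ℝ)
    (ha : a = v) (hc : c = b) (hd : d = d') :
    X * mcast ha hd (Y * mcast hc rfl Z) = (X * mcast ha rfl Y) * mcast hc hd Z := by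
  subst ha hc hd; exact (Matrix.mul_assoc X Y Z).symm

lemma mul_mcast_out {u v c d d' : ℕ} (W : Matrix (Fin u) (Fin v) ℝ)
    (Z : Matrix (Fin c) (Fin d) ℝ) (hc : c = v) (hd : d = d') :
    W * mcast hc hd Z = mcast rfl hd (W * mcast hc rfl Z) := by
  subst hc hd; rfl

lemma fkron_def {m n p q : ℕ} (A : Matrix (Fin m) (Fin n) ℝ) (B : Matrix (Fin p) (Fin q) ℝ) :
    fkron A B = Matrix.reindex finProdFinEquiv finProdFinEquiv (A ⊗ₖ B) := rfl

lemma fkron_apply {m n p q : ℕ} (A : Matrix (Fin m) (Fin n) ℝ) (B : Matrix (Fin p) (Fin q) ℝ)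
    (i : Fin m) (k : Fin p) (j : Fin n) (l : Fin q) :
    fkron A B (finProdFinEquiv (i, k)) (finProdFinEquiv (j, l)) = A i j * B k l := by
  simp [fkron]

lemma fkron_mul {m n k p q l : ℕ} (A : Matrix (Fin m) (Fin n) ℝ) (B : Matrix (Fin n) (Fin k) ℝ)
    (C : Matrix (Fin p) (Fin q) ℝ) (D : Matrix (Fin q) (Fin l) ℝ) :
    fkron (A * B) (C * D) = fkron A C * fkron B D := by
  rw [fkron_def, fkron_def, fkron_def, Matrix.mul_kronecker_mul,
    Matrix.reindex_apply, Matrix.reindex_apply, Matrix.reindex_apply,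
    Matrix.submatrix_mul_equiv]

lemma fkron_mul_one {a b c d : ℕ} (X : Matrix (Fin a) (Fin b) ℝ) (Y : Matrix (Fin b) (Fin c) ℝ) :
    fkron (X * Y) (1 : Matrix (Fin d) (Fin d) ℝ)
      = fkron X (1 : Matrix (Fin d) (Fin d) ℝ) * fkron Y (1 : Matrix (Fin d) (Fin d) ℝ) := by
  simpa using fkron_mul X Y (1 : Matrix (Fin d) (Fin d) ℝ) 1

lemma fkron_one_one (a b : ℕ) :
    fkron (1 : Matrix (Fin a) (Fin a) ℝ) (1 : Matrix (Fin b) (Fin b) ℝ) = 1 := by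
  rw [fkron_def, Matrix.one_kronecker_one, Matrix.reindex_apply, Matrix.submatrix_one_equiv]

lemma fin_cast_assoc {u v w : ℕ} (h : (u * v) * w = u * (v * w))
    (a : Fin u) (b : Fin v) (c : Fin w) :
    Fin.cast h (finProdFinEquiv (finProdFinEquiv (a, b), c))
      = finProdFinEquiv (a, finProdFinEquiv (b, c)) := by
  ext
  simp [finProdFinEquiv]
  ring

lemma fkron_assoc {m n p q r s : ℕ} (A : Matrix (Fin m) (Fin n) ℝ)
    (B : Matrix (Fin p) (Fin q) ℝ) (C : Matrix (Fin r) (Fin s) ℝ) :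
    fkron (fkron A B) C
      = mcast (mul_assoc m p r).symm (mul_assoc n q s).symm (fkron A (fkron B C)) := by
  ext i j
  obtain ⟨⟨ab, c⟩, rfl⟩ := finProdFinEquiv.surjective i
  obtain ⟨⟨a, b⟩, rfl⟩ := finProdFinEquiv.surjective ab
  obtain ⟨⟨de, f⟩, rfl⟩ := finProdFinEquiv.surjective j
  obtain ⟨⟨d, e⟩, rfl⟩ := finProdFinEquiv.surjective de
  rw [fkron_apply, fkron_apply]
  simp only [mcast, Matrix.submatrix_apply]
  rw [fin_cast_assoc, fin_cast_assoc, fkron_apply, fkron_apply, mul_assoc]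

lemma fkron_mcast {a b a' b' c d : ℕ} (ha : a = a') (hb : b = b')
    (A : Matrix (Fin a) (Fin b) ℝ) (B : Matrix (Fin c) (Fin d) ℝ) :
    fkron (mcast ha hb A) B = mcast (by rw [ha]) (by rw [hb]) (fkron A B) := by
  subst ha hb; rfl

lemma fkron_fkron_one {m n : ℕ} (A : Matrix (Fin m) (Fin n) ℝ) (a d : ℕ) :
    fkron (fkron A (1 : Matrix (Fin a) (Fin a) ℝ)) (1 : Matrix (Fin d) (Fin d) ℝ)
      = mcast (mul_assoc m a d).symm (mul_assoc n a d).symm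
          (fkron A (1 : Matrix (Fin (a * d)) (Fin (a * d)) ℝ)) := by
  rw [fkron_assoc, fkron_one_one]

lemma stp_def {m n p q : ℕ} (A : Matrix (Fin m) (Fin n) ℝ) (B : Matrix (Fin p) (Fin q) ℝ) :
    stp A B = fkron A (1 : Matrix (Fin (Nat.lcm n p / n)) (Fin (Nat.lcm n p / n)) ℝ) *
      mcast (show p * (Nat.lcm n p / p) = n * (Nat.lcm n p / n) by
        rw [Nat.mul_div_cancel' (Nat.dvd_lcm_right n p),
          Nat.mul_div_cancel' (Nat.dvd_lcm_left n p)]) rfl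
        (fkron B (1 : Matrix (Fin (Nat.lcm n p / p)) (Fin (Nat.lcm n p / p)) ℝ)) := rfl

lemma dims_core {n p q r t1 a b t2 c d t3 u v t4 l k : ℕ}
    (hna : n * a = t1) (hpb : p * b = t1) (hqc : (q * b) * c = t2) (hrd : r * d = t2)
    (hqu : q * u = t3) (hrv : r * v = t3) (hnl : n * l = t4) (hpk : (p * u) * k = t4)
    (ht2 : t2 = Nat.lcm (q * b) r) (ht1 : t1 = Nat.lcm n p)
    (ht3 : t3 = Nat.lcm q r) (ht4 : t4 = Nat.lcm n (p * u))
    (hn : 0 < n) (hp : 0 < p) (hq : 0 < q) (hr : 0 < r) :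
    a * c = l ∧ b * c = u * k ∧ d = v * k := by
  have central : p * t2 = q * t4 := by
    calc p * t2 = Nat.lcm (p * (q * b)) (p * r) := by rw [ht2, Nat.lcm_mul_left]
      _ = Nat.lcm (q * (p * b)) (p * r) := by ring_nf
      _ = Nat.lcm (q * Nat.lcm n p) (p * r) := by rw [hpb, ht1]
      _ = Nat.lcm (Nat.lcm (q * n) (q * p)) (p * r) := by rw [Nat.lcm_mul_left]
      _ = Nat.lcm (q * n) (Nat.lcm (q * p) (p * r)) := Nat.lcm_assoc _ _ _
      _ = Nat.lcm (q * n) (Nat.lcm (p * q) (p * r)) := by rw [mul_comm q p]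
      _ = Nat.lcm (q * n) (p * Nat.lcm q r) := by rw [Nat.lcm_mul_left]
      _ = Nat.lcm (q * n) (q * (p * u)) := by rw [← ht3, ← hqu]; ring_nf
      _ = q * Nat.lcm n (p * u) := by rw [Nat.lcm_mul_left]
      _ = q * t4 := by rw [ht4]
  have e1 : a * c = l := by
    have h : (n * q) * (a * c) = (n * q) * l := by
      calc (n * q) * (a * c) = ((n * a) * c) * q := by ring
        _ = (t1 * c) * q := by rw [hna]
        _ = ((p * b) * c) * q := by rw [hpb]
        _ = ((q * b) * c) * p := by ring
        _ = t2 * p := by rw [hqc]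
        _ = q * t4 := by rw [mul_comm, central]
        _ = q * (n * l) := by rw [hnl]
        _ = (n * q) * l := by ring
    exact Nat.eq_of_mul_eq_mul_left (Nat.mul_pos hn hq) h
  refine ⟨e1, ?_, ?_⟩
  · have h : p * (b * c) = p * (u * k) := by
      calc p * (b * c) = ((p * b) * c) := by ring
        _ = (n * a) * c := by rw [hpb, ← hna]
        _ = n * (a * c) := by ring
        _ = n * l := by rw [e1]
        _ = (p * u) * k := by rw [hnl, ← hpk]
        _ = p * (u * k) := by ring
    exact Nat.eq_of_mul_eq_mul_left hp h
  · have h : (p * r) * d = (p * r) * (v * k) := by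
      calc (p * r) * d = p * (r * d) := by ring
        _ = p * t2 := by rw [hrd]
        _ = q * t4 := central
        _ = q * ((p * u) * k) := by rw [hpk]
        _ = ((q * u) * k) * p := by ring
        _ = (t3 * k) * p := by rw [hqu]
        _ = ((r * v) * k) * p := by rw [hrv]
        _ = (p * r) * (v * k) := by ring
    exact Nat.eq_of_mul_eq_mul_left (Nat.mul_pos hp hr) h

lemma stp_dims (n p q r : ℕ) :
    (Nat.lcm n p / n) * (Nat.lcm (q * (Nat.lcm n p / p)) r / (q * (Nat.lcm n p / p)))
        = Nat.lcm n (p * (Nat.lcm q r / q)) / n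
    ∧ (Nat.lcm n p / p) * (Nat.lcm (q * (Nat.lcm n p / p)) r / (q * (Nat.lcm n p / p)))
        = (Nat.lcm q r / q) * (Nat.lcm n (p * (Nat.lcm q r / q)) / (p * (Nat.lcm q r / q)))
    ∧ Nat.lcm (q * (Nat.lcm n p / p)) r / r
        = (Nat.lcm q r / r) * (Nat.lcm n (p * (Nat.lcm q r / q)) / (p * (Nat.lcm q r / q))) := by
  rcases Nat.eq_zero_or_pos n with hn | hn
  · subst hn
    simp [Nat.lcm_zero_left, Nat.zero_div, Nat.div_zero]
  rcases Nat.eq_zero_or_pos p with hp | hp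
  · subst hp
    simp [Nat.lcm_zero_right, Nat.lcm_zero_left, Nat.zero_div, Nat.div_zero]
  rcases Nat.eq_zero_or_pos q with hq | hq
  · subst hq
    simp [Nat.lcm_zero_left, Nat.lcm_zero_right, Nat.zero_div, Nat.div_zero]
  rcases Nat.eq_zero_or_pos r with hr | hr
  · subst hr
    simp [Nat.lcm_zero_right, Nat.zero_div, Nat.div_zero]
  exact dims_core
    (Nat.mul_div_cancel' (Nat.dvd_lcm_left n p))
    (Nat.mul_div_cancel' (Nat.dvd_lcm_right n p))
    (Nat.mul_div_cancel' (Nat.dvd_lcm_left _ r))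
    (Nat.mul_div_cancel' (Nat.dvd_lcm_right _ r))
    (Nat.mul_div_cancel' (Nat.dvd_lcm_left q r))
    (Nat.mul_div_cancel' (Nat.dvd_lcm_right q r))
    (Nat.mul_div_cancel' (Nat.dvd_lcm_left n _))
    (Nat.mul_div_cancel' (Nat.dvd_lcm_right n _))
    rfl rfl rfl rfl hn hp hq hr

noncomputable def tri {m n p q r s : ℕ} (A : Matrix (Fin m) (Fin n) ℝ)
    (B : Matrix (Fin p) (Fin q) ℝ) (C : Matrix (Fin r) (Fin s) ℝ)
    (a b c : ℕ) (h1 : p * b = n * a) (h2 : r * c = q * b) :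
    Matrix (Fin (m * a)) (Fin (s * c)) ℝ :=
  fkron A (1 : Matrix (Fin a) (Fin a) ℝ) *
      mcast h1 rfl (fkron B (1 : Matrix (Fin b) (Fin b) ℝ)) *
    mcast h2 rfl (fkron C (1 : Matrix (Fin c) (Fin c) ℝ))

lemma tri_congr {m n p q r s : ℕ} (A : Matrix (Fin m) (Fin n) ℝ)
    (B : Matrix (Fin p) (Fin q) ℝ) (C : Matrix (Fin r) (Fin s) ℝ)
    {a b c a' b' c' : ℕ} (ea : a = a') (eb : b = b') (ec : c = c')
    (h1 : p * b = n * a) (h2 : r * c = q * b) :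
    tri A B C a b c h1 h2
      = mcast (by rw [ea]) (by rw [ec])
          (tri A B C a' b' c' (by rw [← ea, ← eb]; exact h1) (by rw [← eb, ← ec]; exact h2)) := by
  subst ea; subst eb; subst ec; rfl

lemma flatten_left_generic {m n p q r s : ℕ} (A : Matrix (Fin m) (Fin n) ℝ)
    (B : Matrix (Fin p) (Fin q) ℝ) (C : Matrix (Fin r) (Fin s) ℝ)
    {a b d e : ℕ} (h1 : p * b = n * a) (h : r * e = (q * b) * d) :
    fkron (fkron A (1 : Matrix (Fin a) (Fin a) ℝ) *
          mcast h1 rfl (fkron B (1 : Matrix (Fin b) (Fin b) ℝ)))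
        (1 : Matrix (Fin d) (Fin d) ℝ) *
        mcast h rfl (fkron C (1 : Matrix (Fin e) (Fin e) ℝ))
      = mcast (mul_assoc m a d).symm rfl
          (tri A B C (a * d) (b * d) e
            (by rw [← mul_assoc, ← mul_assoc, h1])
            (by rw [h, mul_assoc])) := by
  simp only [fkron_mul_one, fkron_mcast, fkron_fkron_one, mcast_mcast, mcast_mul]
  rfl

lemma flatten_right_generic {m n p q r s : ℕ} (A : Matrix (Fin m) (Fin n) ℝ)
    (B : Matrix (Fin p) (Fin q) ℝ) (C : Matrix (Fin r) (Fin s) ℝ)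
    {a b c d : ℕ} (h4 : r * c = q * b) (h3 : (p * b) * d = n * a) :
    fkron A (1 : Matrix (Fin a) (Fin a) ℝ) *
        mcast h3 rfl
          (fkron (fkron B (1 : Matrix (Fin b) (Fin b) ℝ) *
              mcast h4 rfl (fkron C (1 : Matrix (Fin c) (Fin c) ℝ)))
            (1 : Matrix (Fin d) (Fin d) ℝ))
      = mcast rfl (mul_assoc s c d).symm
          (tri A B C a (b * d) (c * d)
            (by rw [← mul_assoc, h3])
            (by rw [← mul_assoc, ← mul_assoc, h4])) := by
  simp only [fkron_mul_one, fkron_mcast, fkron_fkron_one, mcast_mcast, mcast_mul]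
  rw [mul_mcast_assoc]
  rw [mul_mcast_out]
  rfl

lemma submatrix_cast_eq {a b a' b' : ℕ} (N : Matrix (Fin a') (Fin b') ℝ)
    (ha : a = a') (hb : b = b') :
    N.submatrix (Fin.cast ha) (Fin.cast hb) = mcast ha.symm hb.symm N := rfl

/-- The semi-tensor product is associative: `(A ⋉ B) ⋉ C = A ⋉ (B ⋉ C)`, the two
sides being matrices of the same dimensions after identifying the index types
arising from the iterated lcm computations. -/
theorem stp_assoc {m n p q r s : ℕ}
    (A : Matrix (Fin m) (Fin n) ℝ) (B : Matrix (Fin p) (Fin q) ℝ)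
    (C : Matrix (Fin r) (Fin s) ℝ) :
    ∃ (hrow : (m * (Nat.lcm n p / n)) *
          (Nat.lcm (q * (Nat.lcm n p / p)) r / (q * (Nat.lcm n p / p)))
        = m * (Nat.lcm n (p * (Nat.lcm q r / q)) / n))
      (hcol : s * (Nat.lcm (q * (Nat.lcm n p / p)) r / r)
        = (s * (Nat.lcm q r / r)) *
            (Nat.lcm n (p * (Nat.lcm q r / q)) / (p * (Nat.lcm q r / q)))),
      stp (stp A B) C = (stp A (stp B C)).submatrix (Fin.cast hrow) (Fin.cast hcol) := by
  obtain ⟨e1, e2, e3⟩ := stp_dims n p q r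
  refine ⟨by rw [mul_assoc, e1], by rw [e3, mul_assoc], ?_⟩
  rw [submatrix_cast_eq]
  simp only [stp_def]
  rw [flatten_left_generic A B C]
  rw [flatten_right_generic A B C]
  rw [tri_congr A B C e1 e2 e3]
  rw [mcast_mcast, mcast_mcast]
end

section
/- If A ∈ M_{m×m}(ℝ) and B ∈ M_{p×p}(ℝ) are square invertible matrices, then their semi-tensor product A ⋉ B ∈ M_{t×t}(ℝ), where t = lcm(m,p), is invertible and (A ⋉ B)⁻¹ = B⁻¹ ⋉ A⁻¹. -/
/-!
For `n ∣ t`, the map `M ↦ M ⊗ I_{t/n}` is a monoid homomorphism into `t × t` matrices that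
commutes with the nonsingular inverse, and `A ⋉ B` is the product of the images of `A` and `B`.
Hence `A ⋉ B` is a unit, and `(A ⋉ B)⁻¹ = (B⁻¹ ⊗ I)(A⁻¹ ⊗ I) = B⁻¹ ⋉ A⁻¹`.
-/

open Matrix

/-- The semi-tensor product `A ⋉ B` of square matrices `A ∈ M_{m×m}`, `B ∈ M_{p×p}`,
viewed as a `t × t` matrix, `t = lcm(m,p)`. -/
noncomputable def stpSq {m p : ℕ} (A : Matrix (Fin m) (Fin m) ℝ)
    (B : Matrix (Fin p) (Fin p) ℝ) :
    Matrix (Fin (Nat.lcm m p)) (Fin (Nat.lcm m p)) ℝ :=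
  Matrix.reindex
    (finCongr (Nat.mul_div_cancel' (Nat.dvd_lcm_left m p)))
    (finCongr (Nat.mul_div_cancel' (Nat.dvd_lcm_right m p)))
    (stp A B)

noncomputable def kronOneHom {n t : ℕ} (h : n ∣ t) :
    Matrix (Fin n) (Fin n) ℝ →* Matrix (Fin t) (Fin t) ℝ where
  toFun M := reindex (finCongr (Nat.mul_div_cancel' h)) (finCongr (Nat.mul_div_cancel' h))
    (fkron M (1 : Matrix (Fin (t / n)) (Fin (t / n)) ℝ))
  map_one' := by
    simp only [fkron, one_kronecker_one, reindex_apply, submatrix_one_equiv]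
  map_mul' M N := by
    simp only [fkron, reindex_apply, submatrix_mul_equiv, ← mul_kronecker_mul, mul_one]

lemma kronOneHom_inv {n t : ℕ} (h : n ∣ t) (M : Matrix (Fin n) (Fin n) ℝ) :
    (kronOneHom h M)⁻¹ = kronOneHom h M⁻¹ := by
  simp only [kronOneHom, fkron, MonoidHom.coe_mk, OneHom.coe_mk, inv_reindex]
  rw [inv_kronecker, inv_one]

lemma kronOneHom_submatrix_cast {n t t' : ℕ} (h : n ∣ t) (e : t' = t)
    (M : Matrix (Fin n) (Fin n) ℝ) :
    (kronOneHom h M).submatrix (Fin.cast e) (Fin.cast e) = kronOneHom (e ▸ h) M := by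
  subst e
  rfl

lemma stpSq_eq_mul {m p : ℕ} (A : Matrix (Fin m) (Fin m) ℝ) (B : Matrix (Fin p) (Fin p) ℝ) :
    stpSq A B = kronOneHom (Nat.dvd_lcm_left m p) A * kronOneHom (Nat.dvd_lcm_right m p) B := by
  simp only [stpSq, stp, kronOneHom, MonoidHom.coe_mk, OneHom.coe_mk, reindex_apply,
    ← submatrix_mul_equiv _ _ _ (finCongr (Nat.mul_div_cancel' (Nat.dvd_lcm_left m p))).symm,
    submatrix_submatrix]
  rfl

/-- If `A ∈ M_{m×m}(ℝ)` and `B ∈ M_{p×p}(ℝ)` are invertible, then `A ⋉ B ∈ M_{t×t}(ℝ)`,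
`t = lcm(m,p)`, is invertible and `(A ⋉ B)⁻¹ = B⁻¹ ⋉ A⁻¹`. -/
theorem stp_inv {m p : ℕ} (A : Matrix (Fin m) (Fin m) ℝ) (B : Matrix (Fin p) (Fin p) ℝ)
    (hA : IsUnit A) (hB : IsUnit B) :
    IsUnit (stpSq A B) ∧
      (stpSq A B)⁻¹ = (stpSq B⁻¹ A⁻¹).submatrix
        (Fin.cast (Nat.lcm_comm m p)) (Fin.cast (Nat.lcm_comm m p)) := by
  rw [stpSq_eq_mul, stpSq_eq_mul]
  refine ⟨(hA.map _).mul (hB.map _), ?_⟩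
  rw [Matrix.mul_inv_rev, kronOneHom_inv, kronOneHom_inv,
    submatrix_mul _ _ _ (Fin.cast (Nat.lcm_comm m p)) _ (finCongr (Nat.lcm_comm m p)).bijective,
    kronOneHom_submatrix_cast, kronOneHom_submatrix_cast]
end

section
/- Let n_1, …, n_d be positive integers and n = n_1⋯n_d. The set D = { x_1 ⊗ x_2 ⊗ ⋯ ⊗ x_d : x_s ∈ ℝ^{n_s}, s ∈ [1,d] } of Kronecker-decomposable vectors is a closed subset of ℝⁿ; consequently, for every V ∈ ℝⁿ there exist x*_1 ∈ ℝ^{n_1}, …, x*_d ∈ ℝ^{n_d} minimizing ‖V − x_1 ⊗ ⋯ ⊗ x_d‖ over all tuples (x_1, …, x_d), i.e., the nearest Kronecker product problem has a solution. -/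
/-- The `s`-th mixed-radix digit (0-indexed) of an index `k ∈ Fin (n₁⋯n_d)`. -/
def digitFin {d : ℕ} (n : Fin d → ℕ) (s : Fin d) (k : Fin (∏ t, n t)) : Fin (n s) :=
  ⟨(k.val / ∏ t ∈ Finset.Ioi s, n t) % n s,
   Nat.mod_lt _ (Nat.pos_of_ne_zero fun h0 => by
     have hk : (0 : ℕ) < ∏ t, n t := Nat.lt_of_le_of_lt (Nat.zero_le _) k.isLt
     rw [Finset.prod_eq_zero (Finset.mem_univ s) h0] at hk
     exact Nat.lt_irrefl 0 hk)⟩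

/-- The iterated Kronecker product `x₁ ⊗ x₂ ⊗ ⋯ ⊗ x_d` of column vectors
`x_s ∈ ℝ^{n_s}`, as a vector in `ℝ^{n₁⋯n_d}` (big-endian mixed-radix indexing). -/
noncomputable def bigKron {d : ℕ} (n : Fin d → ℕ)
    (x : ∀ s, EuclideanSpace ℝ (Fin (n s))) :
    EuclideanSpace ℝ (Fin (∏ t, n t)) :=
  WithLp.toLp 2 fun k => ∏ s, x s (digitFin n s k)

/-!
The Euclidean norm is multiplicative, `‖x₁ ⊗ ⋯ ⊗ x_d‖ = ∏ ‖x_s‖`, because the mixed-radix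
digits identify the index set of `ℝ^{n₁⋯n_d}` with `∏ Fin n_s`. Rescaling the factors by
scalars with product one therefore rebalances any decomposable vector `v` so that every factor
has norm `‖v‖ ^ (1/d)`. Near any point, the decomposable vectors are thus the continuous image
of a compact product of balls, so they form a closed set; a nearest point to it exists because
closed balls of `ℝⁿ` are compact.
-/

open Finset Topology Metric

theorem isClosed_of_locally_subset_isCompact {X : Type*} [TopologicalSpace X] [T2Space X]
    {S : Set X} (h : ∀ x, ∃ U ∈ 𝓝 x, ∃ K ⊆ S, IsCompact K ∧ S ∩ U ⊆ K) : IsClosed S := by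
  refine isClosed_of_closure_subset fun x hx => ?_
  obtain ⟨U, hU, K, hKS, hK, hSUK⟩ := h x
  rw [mem_closure_iff_nhdsWithin_neBot, nhdsWithin_restrict' S hU] at hx
  exact hKS <| hK.isClosed.closure_subset <|
    mem_closure_iff_nhdsWithin_neBot.2 (hx.mono (nhdsWithin_mono x hSUK))

theorem Nat.mod_prod_eq_of_forall_div_prod_Ioi_mod_eq {d : ℕ} (n : Fin d → ℕ) {a b : ℕ}
    (h : ∀ s, (a / ∏ t ∈ Ioi s, n t) % n s = (b / ∏ t ∈ Ioi s, n t) % n s) :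
    a % ∏ t, n t = b % ∏ t, n t := by
  induction d with
  | zero => simp only [univ_eq_empty, prod_empty, Nat.mod_one]
  | succ d ih =>
    have htail := ih (fun t => n t.succ) fun s => by simpa only [Fin.prod_Ioi_succ] using h s.succ
    have hhead := h 0
    rw [Fin.prod_Ioi_zero] at hhead
    rw [Fin.prod_univ_succ, mul_comm, Nat.mod_mul, Nat.mod_mul, htail, hhead]

section Kronecker

variable {d : ℕ} (n : Fin d → ℕ)

theorem digitFin_injective : Function.Injective fun k (s : Fin d) => digitFin n s k :=
  fun a b h => Fin.ext <| by
    simpa only [Nat.mod_eq_of_lt a.isLt, Nat.mod_eq_of_lt b.isLt] using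
      Nat.mod_prod_eq_of_forall_div_prod_Ioi_mod_eq n fun s => congrArg Fin.val (congrFun h s)

theorem digitFin_bijective : Function.Bijective fun k (s : Fin d) => digitFin n s k :=
  (Fintype.bijective_iff_injective_and_card _).2 ⟨digitFin_injective n, by simp [Fintype.card_pi]⟩

theorem sum_prod_digitFin {M : Type*} [CommSemiring M] (f : ∀ s, Fin (n s) → M) :
    ∑ k, ∏ s, f s (digitFin n s k) = ∏ s, ∑ i, f s i := by
  rw [Fintype.prod_sum]
  exact (digitFin_bijective n).sum_comp fun g => ∏ s, f s (g s)

theorem inner_bigKron (x y : ∀ s, EuclideanSpace ℝ (Fin (n s))) :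
    inner ℝ (bigKron n x) (bigKron n y) = ∏ s, inner ℝ (x s) (y s) := by
  simp only [PiLp.inner_apply, bigKron, RCLike.inner_apply, conj_trivial, ← prod_mul_distrib]
  exact sum_prod_digitFin n fun s i => y s i * x s i

theorem norm_bigKron (x : ∀ s, EuclideanSpace ℝ (Fin (n s))) :
    ‖bigKron n x‖ = ∏ s, ‖x s‖ := by
  have h := inner_bigKron n x x
  simp only [real_inner_self_eq_norm_sq, prod_pow] at h
  exact (sq_eq_sq₀ (norm_nonneg _) (prod_nonneg fun s _ => norm_nonneg _)).1 h

theorem bigKron_smul (c : Fin d → ℝ) (x : ∀ s, EuclideanSpace ℝ (Fin (n s))) :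
    bigKron n (fun s => c s • x s) = (∏ s, c s) • bigKron n x := by
  ext k
  simp only [bigKron, PiLp.smul_apply, smul_eq_mul, prod_mul_distrib]

theorem continuous_bigKron : Continuous (bigKron n) :=
  (PiLp.continuous_toLp 2 _).comp <| continuous_pi fun k => continuous_finsetProd _ fun s _ =>
    (EuclideanSpace.proj (digitFin n s k)).continuous.comp (continuous_apply s)

theorem exists_bigKron_eq_and_norm_eq (x : ∀ s, EuclideanSpace ℝ (Fin (n s))) :
    ∃ y, bigKron n y = bigKron n x ∧ ∀ s, ‖y s‖ = ‖bigKron n x‖ ^ (d : ℝ)⁻¹ := by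
  by_cases hx : ∃ s, x s = 0
  · obtain ⟨s₀, hs₀⟩ := hx
    have hzero : ∀ y : ∀ s, EuclideanSpace ℝ (Fin (n s)), y s₀ = 0 → bigKron n y = 0 :=
      fun y hy => by ext k; exact prod_eq_zero (mem_univ s₀) (by simp [hy])
    have hd : (d : ℝ)⁻¹ ≠ 0 := inv_ne_zero (Nat.cast_ne_zero.2 (Fin.pos s₀).ne')
    exact ⟨0, by rw [hzero 0 rfl, hzero x hs₀], fun s => by simp [hzero x hs₀, Real.zero_rpow hd]⟩
  push Not at hx
  set r := ‖bigKron n x‖ ^ (d : ℝ)⁻¹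
  refine ⟨fun s => (r / ‖x s‖) • x s, ?_, fun s => ?_⟩
  · have hv : ‖bigKron n x‖ ≠ 0 := by
      rw [norm_bigKron]; exact prod_ne_zero_iff.2 fun s _ => norm_ne_zero_iff.2 (hx s)
    have hrd : r ^ d = ‖bigKron n x‖ := by
      rcases eq_or_ne d 0 with rfl | hd
      · simp [norm_bigKron]
      · exact Real.rpow_inv_natCast_pow (norm_nonneg _) hd
    rw [bigKron_smul, prod_div_distrib, prod_const, card_univ, Fintype.card_fin, hrd,
      ← norm_bigKron, div_self hv, one_smul]
  · rw [norm_smul, norm_div, norm_norm, div_mul_cancel₀ _ (norm_ne_zero_iff.2 (hx s)),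
      Real.norm_of_nonneg (by positivity)]

theorem range_bigKron_inter_closedBall_subset (R : ℝ) :
    Set.range (bigKron n) ∩ closedBall 0 R ⊆
      bigKron n '' Set.univ.pi fun _ => closedBall 0 (R ^ (d : ℝ)⁻¹) := by
  rintro _ ⟨⟨x, rfl⟩, hR⟩
  obtain ⟨y, hyx, hy⟩ := exists_bigKron_eq_and_norm_eq n x
  refine ⟨y, fun s _ => ?_, hyx⟩
  rw [mem_closedBall_zero_iff, hy]
  exact Real.rpow_le_rpow (norm_nonneg _) (mem_closedBall_zero_iff.1 hR) (by positivity)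

theorem isClosed_range_bigKron : IsClosed (Set.range (bigKron n)) :=
  isClosed_of_locally_subset_isCompact fun v =>
    ⟨closedBall 0 (‖v‖ + 1), closedBall_mem_nhds_of_mem (by simp),
      _, Set.image_subset_range _ _,
      (isCompact_univ_pi fun _ => isCompact_closedBall _ _).image (continuous_bigKron n),
      range_bigKron_inter_closedBall_subset n _⟩

end Kronecker

theorem NKP_exists_general {d : ℕ} (n : Fin d → ℕ) :
    IsClosed {v : EuclideanSpace ℝ (Fin (∏ t, n t)) | ∃ x, v = bigKron n x} ∧
    ∀ V : EuclideanSpace ℝ (Fin (∏ t, n t)),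
      ∃ x : ∀ s, EuclideanSpace ℝ (Fin (n s)),
        ∀ y : ∀ s, EuclideanSpace ℝ (Fin (n s)),
          ‖V - bigKron n x‖ ≤ ‖V - bigKron n y‖ := by
  have hclosed := isClosed_range_bigKron n
  refine ⟨by simpa only [Set.range, eq_comm] using hclosed, fun V => ?_⟩
  obtain ⟨_, ⟨x, rfl⟩, hx⟩ := hclosed.exists_infDist_eq_dist (Set.range_nonempty _) V
  refine ⟨x, fun y => ?_⟩
  rw [← dist_eq_norm, ← dist_eq_norm, ← hx]
  exact infDist_le_dist_of_mem ⟨y, rfl⟩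

/-- The set of Kronecker-decomposable vectors is closed in `ℝⁿ`; consequently the
nearest Kronecker product problem always has a solution. -/
theorem NKP_exists {d : ℕ} (n : Fin d → ℕ) (hn : ∀ s, 0 < n s) :
    IsClosed {v : EuclideanSpace ℝ (Fin (∏ t, n t)) | ∃ x, v = bigKron n x} ∧
    ∀ V : EuclideanSpace ℝ (Fin (∏ t, n t)),
      ∃ x : ∀ s, EuclideanSpace ℝ (Fin (n s)),
        ∀ y : ∀ s, EuclideanSpace ℝ (Fin (n s)),
          ‖V - bigKron n x‖ ≤ ‖V - bigKron n y‖ :=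
  NKP_exists_general n
end
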